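/- Let A ⊂ L^∞ be a conic acceptance set containing 0 and S an eligible asset. If X and Y satisfy X_0, Y_0 > 0 and X_T/X_0 ≥ Y_T/Y_0 a.s. (return-wise domination), then R_{A,S}(X) ≤ R_{A,S}(Y). -/

import Mathlib

open MeasureTheory

/-- The set of percentages making the combined position acceptable. -/
def IRset {Ω : Type*} [MeasurableSpace Ω] {μ : Measure Ω}
    (A : Set (Lp ℝ ⊤ μ)) (S0 X0 : ℝ) (ST XT : Lp ℝ ⊤ μ) : Set ℝ :=
  {l : ℝ | l ∈ Set.Icc (0 : ℝ) 1 ∧ (1 - l) • XT + l • ((X0 / S0) • ST) ∈ A}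

/-- The intrinsic risk measure. -/
noncomputable def IR {Ω : Type*} [MeasurableSpace Ω] {μ : Measure Ω}
    (A : Set (Lp ℝ ⊤ μ)) (S0 X0 : ℝ) (ST XT : Lp ℝ ⊤ μ) : ℝ :=
  sInf (IRset A S0 X0 ST XT)

lemma Lp_smul_le_smul {Ω : Type*} [MeasurableSpace Ω] {μ : Measure Ω}
    (a b : Lp ℝ ⊤ μ) (c : ℝ) (hc : 0 ≤ c) (h : a ≤ b) : c • a ≤ c • b := by
  rw [← Lp.coeFn_le] at h ⊢
  filter_upwards [h, Lp.coeFn_smul c a, Lp.coeFn_smul c b] with ω hω ha hb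
  rw [ha, hb]
  exact mul_le_mul_of_nonneg_left hω hc

theorem stmt13 {Ω : Type*} [MeasurableSpace Ω] (μ : Measure Ω) [IsProbabilityMeasure μ]
    (A : Set (Lp ℝ ⊤ μ)) (hne : A.Nonempty) (hproper : A ≠ Set.univ)
    (hmono : ∀ X ∈ A, ∀ Y : Lp ℝ ⊤ μ, X ≤ Y → Y ∈ A) (h0 : (0 : Lp ℝ ⊤ μ) ∈ A)
    (hcone : ∀ Z ∈ A, ∀ c : ℝ, 0 < c → c • Z ∈ A)
    (S0 : ℝ) (hS0 : 0 < S0) (ST : Lp ℝ ⊤ μ) (hSA : ST ∈ A) (hST : 0 ≤ ST)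
    (X0 Y0 : ℝ) (XT YT : Lp ℝ ⊤ μ)
    (hX0 : 0 < X0) (hY0 : 0 < Y0) (hret : Y0⁻¹ • YT ≤ X0⁻¹ • XT) :
    IR A S0 X0 ST XT ≤ IR A S0 Y0 ST YT := by
  apply csInf_le_csInf
  · exact ⟨0, fun l hl => hl.1.1⟩
  · refine ⟨1, ⟨zero_le_one, le_refl 1⟩, ?_⟩
    have : (1 - 1 : ℝ) • YT + (1 : ℝ) • ((Y0 / S0) • ST) = (Y0 / S0) • ST := by
      simp
    rw [this]
    exact hcone ST hSA _ (div_pos hY0 hS0)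
  · rintro l ⟨⟨hl0, hl1⟩, hA⟩
    refine ⟨⟨hl0, hl1⟩, ?_⟩
    have hW : (X0 / Y0) • ((1 - l) • YT + l • ((Y0 / S0) • ST)) ∈ A :=
      hcone _ hA _ (div_pos hX0 hY0)
    refine hmono _ hW _ ?_
    have heq : (X0 / Y0) • ((1 - l) • YT + l • ((Y0 / S0) • ST)) =
        (1 - l) • ((X0 / Y0) • YT) + l • ((X0 / S0) • ST) := by
      rw [smul_add, smul_comm (X0 / Y0) (1 - l), smul_comm (X0 / Y0) l,
        smul_smul (X0 / Y0) (Y0 / S0),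
        show X0 / Y0 * (Y0 / S0) = X0 / S0 from by field_simp]
    rw [heq]
    refine add_le_add ?_ le_rfl
    apply Lp_smul_le_smul _ _ _ (by linarith)
    have h1 : (X0 / Y0) • YT = X0 • (Y0⁻¹ • YT) := by
      rw [smul_smul, div_eq_mul_inv]
    have h2 : X0 • (X0⁻¹ • XT) = XT := by
      rw [smul_smul, mul_inv_cancel₀ hX0.ne', one_smul]
    calc (X0 / Y0) • YT = X0 • (Y0⁻¹ • YT) := h1
      _ ≤ X0 • (X0⁻¹ • XT) := Lp_smul_le_smul _ _ _ hX0.le hret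
      _ = XT := h2
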